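/- With notation as in the level-k setup, let Γ_k(C_1,…,C_r) be the graph whose vertex set is the set of nodes (orbits of L_k × R_k × G on T^o(C_1,…,C_r)), with two distinct nodes N_1 and N_2 joined by an edge if and only if there exist a tuple τ ∈ N_1 and an element Q ∈ B_P such that τ·Q ∈ N_2. Then every connected component of Γ_k(C_1,…,C_r) is a complete graph, and two nodes lie in the same connected component if and only if they are contained in the same B_P × G-orbit on T^o(C_1,…,C_r); consequently the connected components of Γ_k(C_1,…,C_r) are in one-to-one correspondence with the B_P × G-orbits on T^o(C_1,…,C_r). -/

import Mathlib

/-- The braid move `Q_i` (`0`-indexed): it replaces the entries in positions `i` and `i+1`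
of a tuple `(g_0, …, g_{r-1})` by `g_{i+1}` and `g_{i+1}⁻¹ * g_i * g_{i+1}` respectively,
leaving all other entries unchanged.  (For `i + 1 ≥ r` it is the identity.) -/
def braidMove {G : Type*} [Group G] {r : ℕ} (i : ℕ) (g : Fin r → G) : Fin r → G :=
  fun m =>
    if _hm : (m : ℕ) = i then
      if h : i + 1 < r then g ⟨i + 1, h⟩ else g m
    else if hm' : (m : ℕ) = i + 1 then
      (g m)⁻¹ * g ⟨i, by have := m.isLt; omega⟩ * g m
    else g m

/-- The braid relations on `n` generators `Q_0, …, Q_{n-1}`. -/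
def braidRels (n : ℕ) : Set (FreeGroup (Fin n)) :=
  {w | (∃ i j : Fin n, (i : ℕ) + 1 = (j : ℕ) ∧
          w = FreeGroup.of i * FreeGroup.of j * FreeGroup.of i *
              (FreeGroup.of j * FreeGroup.of i * FreeGroup.of j)⁻¹) ∨
       (∃ i j : Fin n, (i : ℕ) + 2 ≤ (j : ℕ) ∧
          w = FreeGroup.of i * FreeGroup.of j * (FreeGroup.of j * FreeGroup.of i)⁻¹)}

/-- The Artin braid group on `r` strings, presented by `r - 1` generators
subject to the braid relations. -/
abbrev BraidGroup (r : ℕ) : Type := PresentedGroup (braidRels (r - 1))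

/-- Diagonal conjugation of a tuple by a group element `h`. -/
def diagConj {G : Type*} [Group G] {n : ℕ} (h : G) (g : Fin n → G) : Fin n → G :=
  fun m => h⁻¹ * g m * h

/-- The set `T^o(C_1, …, C_r)` of generating product-one tuples with `τ_i ∈ C_i`
for every `i`. -/
def nielsenTuples {G : Type*} [Group G] {r : ℕ} (C : Fin r → Set G) : Set (Fin r → G) :=
  {τ | (∀ m, τ m ∈ C m) ∧ (List.ofFn τ).prod = 1 ∧ Subgroup.closure (Set.range τ) = ⊤}
/-- Membership in the parabolic subgroup `B_P`: a braid `b` lies in `B_P` iff the underlying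
permutation `π b` preserves the class vector `C`. -/
def inBP {G : Type*} [Group G] {r : ℕ} (C : Fin r → Set G)
    (π : BraidGroup r →* Equiv.Perm (Fin r)) (b : BraidGroup r) : Prop :=
  ∀ m : Fin r, C (π b m) = C m

/-- Generators of `L_k`: the braid generators `Q_m` with `m + 1 < k` (0-indexed),
touching only the first `k` strings. -/
def LkGens (r k : ℕ) : Set (BraidGroup r) :=
  {x | ∃ m : Fin (r - 1), (m : ℕ) + 1 < k ∧ x = PresentedGroup.of m}

/-- Generators of `R_k`: the braid generators `Q_m` with `k ≤ m` (0-indexed),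
touching only the last `r - k` strings. -/
def RkGens (r k : ℕ) : Set (BraidGroup r) :=
  {x | ∃ m : Fin (r - 1), k ≤ (m : ℕ) ∧ x = PresentedGroup.of m}

/-- Membership in `L_k := ⟨Q_m : m + 1 < k⟩ ⊓ B_P`. -/
def inLk {G : Type*} [Group G] {r : ℕ} (C : Fin r → Set G)
    (π : BraidGroup r →* Equiv.Perm (Fin r)) (k : ℕ) (b : BraidGroup r) : Prop :=
  b ∈ Subgroup.closure (LkGens r k) ∧ inBP C π b

/-- Membership in `R_k := ⟨Q_m : k ≤ m⟩ ⊓ B_P`. -/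
def inRk {G : Type*} [Group G] {r : ℕ} (C : Fin r → Set G)
    (π : BraidGroup r →* Equiv.Perm (Fin r)) (k : ℕ) (b : BraidGroup r) : Prop :=
  b ∈ Subgroup.closure (RkGens r k) ∧ inBP C π b

/-- A node: an orbit of `L_k × R_k × G` on `T^o(C_1, …, C_r)`, where the braid group acts
through `φ` and `G` acts by diagonal conjugation. -/
def IsNode {G : Type*} [Group G] {r : ℕ} (C : Fin r → Set G)
    (π : BraidGroup r →* Equiv.Perm (Fin r)) (φ : BraidGroup r →* Equiv.Perm (Fin r → G))
    (k : ℕ) (N : Set (Fin r → G)) : Prop :=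
  ∃ τ₀ ∈ nielsenTuples C, N = {τ | ∃ l ρ : BraidGroup r, inLk C π k l ∧ inRk C π k ρ ∧
    ∃ h : G, τ = diagConj h (φ (l * ρ) τ₀)}

/-- The head of an `r`-tuple at level `k`: `(g_1, …, g_k, (g_1 ⋯ g_k)⁻¹)`. -/
def headOf {G : Type*} [Group G] {r k : ℕ} (hk : k ≤ r) (g : Fin r → G) : Fin (k + 1) → G :=
  fun m => if h : (m : ℕ) < k then g ⟨(m : ℕ), lt_of_lt_of_le h hk⟩
    else (((List.ofFn g).take k).prod)⁻¹

/-- The tail of an `r`-tuple at level `k`: `(g_1 ⋯ g_k, g_{k+1}, …, g_r)`. -/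
def tailOf {G : Type*} [Group G] {r k : ℕ} (hk : k ≤ r) (g : Fin r → G) :
    Fin (r - k + 1) → G :=
  fun m => if _h : (m : ℕ) = 0 then ((List.ofFn g).take k).prod
    else g ⟨k + (m : ℕ) - 1, by have := m.isLt; omega⟩
/-- Adjacency in the graph `Γ_k(C_1, …, C_r)`: two distinct nodes `N₁`, `N₂` are joined by
an edge iff some tuple of `N₁` is mapped into `N₂` by some element of `B_P`. -/
def nodeAdj {G : Type*} [Group G] {r : ℕ} (C : Fin r → Set G)
    (π : BraidGroup r →* Equiv.Perm (Fin r)) (φ : BraidGroup r →* Equiv.Perm (Fin r → G))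
    (k : ℕ) (N₁ N₂ : Set (Fin r → G)) : Prop :=
  IsNode C π φ k N₁ ∧ IsNode C π φ k N₂ ∧ N₁ ≠ N₂ ∧
    ∃ τ ∈ N₁, ∃ b : BraidGroup r, inBP C π b ∧ φ b τ ∈ N₂


section NodeAux

variable {G : Type*} [Group G] {r : ℕ}

lemma diagConj_one (g : Fin r → G) : diagConj (1 : G) g = g := by
  funext m; simp [diagConj]

lemma diagConj_diagConj (a b : G) (g : Fin r → G) :
    diagConj b (diagConj a g) = diagConj (a * b) g := by
  funext m; simp [diagConj, mul_assoc]

lemma braidMove_diagConj (i : ℕ) (h : G) (g : Fin r → G) :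
    braidMove i (diagConj h g) = diagConj h (braidMove i g) := by
  funext m
  simp only [braidMove, diagConj]
  split_ifs <;> group

variable (C : Fin r → Set G) (π : BraidGroup r →* Equiv.Perm (Fin r))

lemma inBP_one : inBP C π 1 := by intro m; simp [inBP]

lemma inBP_mul {a b : BraidGroup r} (ha : inBP C π a) (hb : inBP C π b) :
    inBP C π (a * b) := by
  intro m
  rw [map_mul, Equiv.Perm.mul_apply]
  exact (ha _).trans (hb m)

lemma inBP_inv {a : BraidGroup r} (ha : inBP C π a) : inBP C π a⁻¹ := by
  intro m
  have h := ha ((π a)⁻¹ m)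
  rw [Equiv.Perm.coe_inv, Equiv.apply_symm_apply] at h
  rw [map_inv]
  exact h.symm

variable (φ : BraidGroup r →* Equiv.Perm (Fin r → G))

lemma phi_diagConj
    (hφ : ∀ (m : Fin (r - 1)) (g : Fin r → G),
      φ (PresentedGroup.of m) g = braidMove (m : ℕ) g)
    (b : BraidGroup r) : ∀ (h : G) (g : Fin r → G),
      φ b (diagConj h g) = diagConj h (φ b g) := by
  have hb : b ∈ Subgroup.closure
      (Set.range (PresentedGroup.of : Fin (r - 1) → BraidGroup r)) := by
    rw [PresentedGroup.closure_range_of]; trivial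
  refine Subgroup.closure_induction ?_ ?_ ?_ ?_ hb
  · rintro x ⟨m, rfl⟩ h g
    rw [hφ, hφ]
    exact braidMove_diagConj _ _ _
  · intro h g; simp
  · intro x y _ _ hx hy h g
    rw [map_mul, Equiv.Perm.mul_apply, hy, hx, Equiv.Perm.mul_apply]
  · intro x _ hx h g
    apply (φ x).injective
    rw [hx, map_inv]
    simp [Equiv.apply_symm_apply]

variable {k : ℕ}

lemma node_nonempty {N : Set (Fin r → G)} (hN : IsNode C π φ k N) :
    ∃ τ, τ ∈ N := by
  obtain ⟨τ₀, _, rfl⟩ := hN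
  refine ⟨τ₀, 1, 1, ⟨Subgroup.one_mem _, inBP_one C π⟩,
    ⟨Subgroup.one_mem _, inBP_one C π⟩, 1, ?_⟩
  simp [diagConj_one]

lemma node_closed_diagConj {N : Set (Fin r → G)} (hN : IsNode C π φ k N)
    {x : Fin r → G} (hx : x ∈ N) (a : G) : diagConj a x ∈ N := by
  obtain ⟨τ₀, _, rfl⟩ := hN
  obtain ⟨l, ρ, hl, hρ, h, rfl⟩ := hx
  exact ⟨l, ρ, hl, hρ, h * a, (diagConj_diagConj h a _)⟩

lemma node_transfer
    (hφ : ∀ (m : Fin (r - 1)) (g : Fin r → G),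
      φ (PresentedGroup.of m) g = braidMove (m : ℕ) g)
    {N : Set (Fin r → G)} (hN : IsNode C π φ k N)
    {x y : Fin r → G} (hx : x ∈ N) (hy : y ∈ N) :
    ∃ c : BraidGroup r, inBP C π c ∧ ∃ a : G, y = diagConj a (φ c x) := by
  obtain ⟨τ₀, _, rfl⟩ := hN
  obtain ⟨l₁, ρ₁, hl₁, hρ₁, a₁, rfl⟩ := hx
  obtain ⟨l₂, ρ₂, hl₂, hρ₂, a₂, rfl⟩ := hy
  refine ⟨(l₂ * ρ₂) * (l₁ * ρ₁)⁻¹,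
    inBP_mul C π (inBP_mul C π hl₂.2 hρ₂.2)
      (inBP_inv C π (inBP_mul C π hl₁.2 hρ₁.2)), a₁⁻¹ * a₂, ?_⟩
  have key : φ ((l₂ * ρ₂) * (l₁ * ρ₁)⁻¹) (φ (l₁ * ρ₁) τ₀) = φ (l₂ * ρ₂) τ₀ := by
    rw [← Equiv.Perm.mul_apply, ← map_mul, inv_mul_cancel_right]
  rw [phi_diagConj φ hφ, key, diagConj_diagConj, mul_inv_cancel_left]

/-- The `B_P × G`-relation between subsets: some tuple of `N₁` is carried into `N₂`
by an element of `B_P` up to diagonal conjugation. -/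
def NodeRel (N₁ N₂ : Set (Fin r → G)) : Prop :=
  ∃ τ ∈ N₁, ∃ b : BraidGroup r, inBP C π b ∧ ∃ h : G, diagConj h (φ b τ) ∈ N₂

lemma nodeRel_refl {N : Set (Fin r → G)} (hN : IsNode C π φ k N) :
    NodeRel C π φ N N := by
  obtain ⟨τ, hτ⟩ := node_nonempty C π φ hN
  exact ⟨τ, hτ, 1, inBP_one C π, 1, by simpa [diagConj_one] using hτ⟩

lemma nodeRel_trans
    (hφ : ∀ (m : Fin (r - 1)) (g : Fin r → G),
      φ (PresentedGroup.of m) g = braidMove (m : ℕ) g)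
    {N₁ N₂ N₃ : Set (Fin r → G)} (hN₂ : IsNode C π φ k N₂)
    (h12 : NodeRel C π φ N₁ N₂) (h23 : NodeRel C π φ N₂ N₃) :
    NodeRel C π φ N₁ N₃ := by
  obtain ⟨τ, hτ, b, hb, h, hσ⟩ := h12
  obtain ⟨τ', hτ', b', hb', h', hm3⟩ := h23
  obtain ⟨c, hc, a, hac⟩ := node_transfer C π φ hφ hN₂ hσ hτ'
  refine ⟨τ, hτ, b' * c * b,
    inBP_mul C π (inBP_mul C π hb' hc) hb, h * (a * h'), ?_⟩
  have key : diagConj h' (φ b' τ') = diagConj (h * (a * h')) (φ (b' * c * b) τ) := by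
    calc diagConj h' (φ b' τ')
        = diagConj h' (φ b' (diagConj a (φ c (diagConj h (φ b τ))))) := by rw [hac]
      _ = diagConj h' (diagConj a (φ b' (φ c (diagConj h (φ b τ))))) := by
            rw [phi_diagConj φ hφ b' a]
      _ = diagConj (a * h') (φ b' (φ c (diagConj h (φ b τ)))) := by
            rw [diagConj_diagConj]
      _ = diagConj (a * h') (φ (b' * c) (diagConj h (φ b τ))) := by
            rw [map_mul φ b' c, Equiv.Perm.mul_apply]
      _ = diagConj (a * h') (diagConj h (φ (b' * c) (φ b τ))) := by
            rw [phi_diagConj φ hφ]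
      _ = diagConj (h * (a * h')) (φ (b' * c) (φ b τ)) := by rw [diagConj_diagConj]
      _ = diagConj (h * (a * h')) (φ (b' * c * b) τ) := by
            rw [map_mul φ (b' * c) b, Equiv.Perm.mul_apply]
  rw [← key]
  exact hm3

lemma nodeRel_mem {N₁ N₂ : Set (Fin r → G)} (hN₂ : IsNode C π φ k N₂)
    (hrel : NodeRel C π φ N₁ N₂) :
    ∃ τ ∈ N₁, ∃ b : BraidGroup r, inBP C π b ∧ φ b τ ∈ N₂ := by
  obtain ⟨τ, hτ, b, hb, h, hm⟩ := hrel
  refine ⟨τ, hτ, b, hb, ?_⟩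
  have h2 := node_closed_diagConj C π φ hN₂ hm h⁻¹
  rwa [diagConj_diagConj, mul_inv_cancel, diagConj_one] at h2

lemma rtg_nodeRel
    (hφ : ∀ (m : Fin (r - 1)) (g : Fin r → G),
      φ (PresentedGroup.of m) g = braidMove (m : ℕ) g)
    {N₁ N₂ : Set (Fin r → G)}
    (h : Relation.ReflTransGen (nodeAdj C π φ k) N₁ N₂) :
    N₁ = N₂ ∨ NodeRel C π φ N₁ N₂ := by
  induction h with
  | refl => exact Or.inl rfl
  | @tail M N₂' _ hbc ih =>
    right
    have hN : IsNode C π φ k M := hbc.1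
    have r2 : NodeRel C π φ M N₂' := by
      obtain ⟨_, _, _, τ, hτ, b, hb, hm⟩ := hbc
      exact ⟨τ, hτ, b, hb, 1, by rwa [diagConj_one]⟩
    rcases ih with rfl | r1
    · exact r2
    · exact nodeRel_trans C π φ hφ hN r1 r2

end NodeAux

/-- Level-`k` setup as before, and let `Γ_k(C_1, …, C_r)` be the graph whose vertices are
the level-`k` nodes, two distinct nodes being adjacent iff an element of `B_P` maps a tuple
of one into the other.  Then every connected component of `Γ_k` is a complete graph, and
two nodes lie in the same connected component if and only if they are contained in the same
`B_P × G`-orbit on `T^o(C_1, …, C_r)`; consequently the connected components correspond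
bijectively to the `B_P × G`-orbits (the braid orbits on the Nielsen class). -/
theorem nodeGraph_components_complete_and_correspond_to_braid_orbits
    {G : Type*} [Group G] [Fintype G] {r : ℕ} (hr : 2 ≤ r)
    (C : Fin r → Set G)
    (hC : ∀ m : Fin r, ∃ x : G, C m = {y | IsConj x y})
    (hord : ∀ i j k : Fin r, i ≤ k → k ≤ j → C i = C j → C k = C i)
    (π : BraidGroup r →* Equiv.Perm (Fin r))
    (hπ : ∀ m : Fin (r - 1),
      π (PresentedGroup.of m) =
        Equiv.swap ⟨(m : ℕ), by have := m.isLt; omega⟩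
          ⟨(m : ℕ) + 1, by have := m.isLt; omega⟩)
    (φ : BraidGroup r →* Equiv.Perm (Fin r → G))
    (hφ : ∀ (m : Fin (r - 1)) (g : Fin r → G),
      φ (PresentedGroup.of m) g = braidMove (m : ℕ) g)
    (k : ℕ) (hk1 : 1 < k) (hk2 : k < r) :
    (∀ N₁ N₂ : Set (Fin r → G), IsNode C π φ k N₁ → IsNode C π φ k N₂ →
      Relation.ReflTransGen (nodeAdj C π φ k) N₁ N₂ →
      N₁ = N₂ ∨ nodeAdj C π φ k N₁ N₂) ∧
    (∀ N₁ N₂ : Set (Fin r → G), IsNode C π φ k N₁ → IsNode C π φ k N₂ →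
      (Relation.ReflTransGen (nodeAdj C π φ k) N₁ N₂ ↔
        ∃ τ ∈ N₁, ∃ b : BraidGroup r, inBP C π b ∧
          ∃ h : G, diagConj h (φ b τ) ∈ N₂)) := by
  constructor
  · intro N₁ N₂ h1 h2 hrt
    rcases rtg_nodeRel C π φ hφ hrt with rfl | hrel
    · exact Or.inl rfl
    · by_cases he : N₁ = N₂
      · exact Or.inl he
      · exact Or.inr ⟨h1, h2, he, nodeRel_mem C π φ h2 hrel⟩
  · intro N₁ N₂ h1 h2
    constructor
    · intro hrt
      rcases rtg_nodeRel C π φ hφ hrt with rfl | hrel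
      · exact nodeRel_refl C π φ h2
      · exact hrel
    · intro hrel
      by_cases he : N₁ = N₂
      · subst he; exact Relation.ReflTransGen.refl
      · exact Relation.ReflTransGen.single ⟨h1, h2, he, nodeRel_mem C π φ h2 hrel⟩
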